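/- There is a universal constant C > 0 (depending only on the annulus {3/4 ≤ |τ| ≤ 8/3}) such that the following holds. Let k ∈ ℤ and let g : ℝ × [0,1] → ℝ be continuous with continuous partial derivative ∂_y g, with g(x,0) = 0 for every x, g(·,y) integrable and square-integrable for each y, g and ∂_y g square-integrable on S = ℝ × (0,1), and suppose that for each y ∈ [0,1] the partial Fourier transform ĝ(ξ,y) in x vanishes for all ξ with |ξ| outside [ (3/4)·2^k, (8/3)·2^k ]. Then sup_{(x,y) ∈ ℝ×[0,1]} |g(x,y)| ≤ C 2^{k/2} ‖g‖_{L²(S)}^{1/2} ‖∂_y g‖_{L²(S)}^{1/2} ≤ C 2^{k/2} ‖∂_y g‖_{L²(S)}. -/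

import Mathlib

/-!
Bernstein in `x`: if `𝓕 h` vanishes outside `[-R, R]`, Fourier inversion and Cauchy–Schwarz
give `|h x| ≤ ∫ |𝓕 h| ≤ √(2R) ‖𝓕 h‖₂`, and Plancherel turns this into `√(2R) ‖h‖₂`.
Agmon in `y`: since `g(x, 0) = 0`, `g(x, y)² = ∫₀^y 2 g ∂_y g ≤ 2 ∫₀¹ |g| |∂_y g|`; integrating
in `x` and applying Cauchy–Schwarz on the strip bounds `‖g(·, y)‖₂²` by `2 ‖g‖ ‖∂_y g‖`.
With `R = (8/3) 2^k` the constants combine to `C = 4`. The second inequality is Poincaré: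
`g(x, y)² ≤ ∫₀¹ (∂_y g)²`, so `‖g‖ ≤ ‖∂_y g‖`.
-/

open MeasureTheory Set FourierTransform ComplexInnerProductSpace

section CauchySchwarz

variable {α : Type*} [MeasurableSpace α] {μ : Measure α}

theorem integral_mul_le_sqrt_mul_sqrt {f g : α → ℝ} (hf₀ : 0 ≤ᵐ[μ] f) (hg₀ : 0 ≤ᵐ[μ] g)
    (hf : MemLp f 2 μ) (hg : MemLp g 2 μ) :
    ∫ a, f a * g a ∂μ ≤ √(∫ a, f a ^ 2 ∂μ) * √(∫ a, g a ^ 2 ∂μ) := by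
  have h := integral_mul_le_Lp_mul_Lq_of_nonneg Real.HolderConjugate.two_two hf₀ hg₀
    (by simpa using hf) (by simpa using hg)
  simpa only [Real.sqrt_eq_rpow, one_div, Real.rpow_two] using h

theorem integral_le_sqrt_measureReal_mul_sqrt [IsFiniteMeasure μ] {f : α → ℝ}
    (hf₀ : 0 ≤ᵐ[μ] f) (hf : MemLp f 2 μ) :
    ∫ a, f a ∂μ ≤ √(μ.real univ) * √(∫ a, f a ^ 2 ∂μ) := by
  simpa [mul_comm] using integral_mul_le_sqrt_mul_sqrt (g := fun _ ↦ 1) hf₀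
    (Filter.Eventually.of_forall fun _ ↦ zero_le_one) hf (memLp_const 1)

end CauchySchwarz

section Fourier

variable {V H : Type*} [NormedAddCommGroup V] [InnerProductSpace ℝ V] [FiniteDimensional ℝ V]
  [MeasurableSpace V] [BorelSpace V]
  [NormedAddCommGroup H] [InnerProductSpace ℂ H] [CompleteSpace H]

theorem integral_norm_sq_fourier_of_integrable {f : V → H} (hc : Continuous f)
    (hf : Integrable f) (hF : Integrable (𝓕 f)) :
    ∫ ξ, ‖𝓕 f ξ‖ ^ 2 = ∫ x, ‖f x‖ ^ 2 := by
  have h := VectorFourier.integral_sesq_fourierIntegral_eq_neg_flip (innerSL ℂ)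
      (L := innerₗ V) Real.continuous_fourierChar continuous_inner hf hF
  rw [flip_innerₗ] at h
  change ∫ ξ, ⟪𝓕 f ξ, 𝓕 f ξ⟫ = ∫ x, ⟪f x, 𝓕⁻ (𝓕 f) x⟫ at h
  rw [hc.fourierInv_fourier_eq hf hF] at h
  apply Complex.ofRealLI.injective
  simpa [← LinearIsometry.integral_comp_comm, inner_self_eq_norm_sq_to_K] using h

theorem norm_le_sqrt_measureReal_mul_sqrt_of_support_fourier_subset {f : V → H}
    (hc : Continuous f) (hf : Integrable f) {s : Set V} (hs : volume s ≠ ⊤)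
    (hsupp : Function.support (𝓕 f) ⊆ s) (x : V) :
    ‖f x‖ ≤ √(volume.real s) * √(∫ v, ‖f v‖ ^ 2) := by
  have := isFiniteMeasure_restrict.mpr hs
  have hFc : Continuous (𝓕 f) := VectorFourier.fourierIntegral_continuous
    Real.continuous_fourierChar continuous_inner hf
  have hFbdd (ξ : V) : ‖𝓕 f ξ‖ ≤ ∫ v, ‖f v‖ :=
    VectorFourier.norm_fourierIntegral_le_integral_norm _ _ _ _ _
  have hFs : MemLp (𝓕 f) 2 (volume.restrict s) :=
    .of_bound hFc.aestronglyMeasurable _ (.of_forall hFbdd)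
  have hF : Integrable (𝓕 f) := by
    rw [← integrableOn_iff_integrable_of_support_subset hsupp]
    exact hFs.integrable one_le_two
  have hnorm_off (ξ : V) (hξ : ξ ∉ s) : ‖𝓕 f ξ‖ = 0 := by
    simpa using Function.notMem_support.mp (fun h ↦ hξ (hsupp h))
  calc ‖f x‖ = ‖𝓕⁻ (𝓕 f) x‖ := by rw [hc.fourierInv_fourier_eq hf hF]
    _ ≤ ∫ ξ, ‖𝓕 f ξ‖ := VectorFourier.norm_fourierIntegral_le_integral_norm _ _ _ _ _
    _ = ∫ ξ in s, ‖𝓕 f ξ‖ := (setIntegral_eq_integral_of_forall_compl_eq_zero hnorm_off).symm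
    _ ≤ √(volume.real s) * √(∫ ξ in s, ‖𝓕 f ξ‖ ^ 2) := by
      simpa using integral_le_sqrt_measureReal_mul_sqrt (.of_forall fun _ ↦ norm_nonneg _)
        hFs.norm
    _ = √(volume.real s) * √(∫ v, ‖f v‖ ^ 2) := by
      rw [setIntegral_eq_integral_of_forall_compl_eq_zero fun ξ hξ ↦ by simp [hnorm_off ξ hξ],
        integral_norm_sq_fourier_of_integrable hc hf hF]

theorem abs_le_sqrt_two_mul_mul_sqrt_of_fourier_eq_zero {h : ℝ → ℝ} (hc : Continuous h)
    (hi : Integrable h) {R : ℝ} (hR : 0 ≤ R)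
    (hsupp : ∀ ξ, R < |ξ| → 𝓕 (fun x ↦ (h x : ℂ)) ξ = 0) (x : ℝ) :
    |h x| ≤ √(2 * R) * √(∫ v, h v ^ 2) := by
  have hsub : Function.support (𝓕 (fun x ↦ (h x : ℂ))) ⊆ Icc (-R) R := fun ξ hξ ↦
    abs_le.mp (not_lt.mp fun h' ↦ hξ (hsupp ξ h'))
  simpa [Real.volume_real_Icc_of_le (by linarith : -R ≤ R), two_mul] using
    norm_le_sqrt_measureReal_mul_sqrt_of_support_fourier_subset
      (Complex.continuous_ofReal.comp hc) hi.ofReal measure_Icc_lt_top.ne hsub x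

end Fourier

section IntervalDeriv

variable {f f' : ℝ → ℝ} {a b y : ℝ}

theorem integral_eq_sub_of_hasDerivWithinAt_Icc (hf' : ContinuousOn f' (Icc a b))
    (hderiv : ∀ t ∈ Icc a b, HasDerivWithinAt f (f' t) (Icc a b) t) (hy : y ∈ Icc a b) :
    ∫ t in a..y, f' t = f y - f a := by
  have hsub : Icc a y ⊆ Icc a b := Icc_subset_Icc_right hy.2
  refine intervalIntegral.integral_eq_sub_of_hasDeriv_right_of_le hy.1
    (fun t ht ↦ (hderiv t (hsub ht)).continuousWithinAt.mono hsub) (fun t ht ↦ ?_)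
    ((hf'.mono hsub).intervalIntegrable_of_Icc hy.1)
  exact ((hderiv t (hsub (Ioo_subset_Icc_self ht))).hasDerivAt
    (Icc_mem_nhds ht.1 (ht.2.trans_le hy.2))).hasDerivWithinAt

theorem abs_sub_le_integral_abs_deriv (hf' : ContinuousOn f' (Icc a b))
    (hderiv : ∀ t ∈ Icc a b, HasDerivWithinAt f (f' t) (Icc a b) t) (hy : y ∈ Icc a b) :
    |f y - f a| ≤ ∫ t in Ioo a b, |f' t| := by
  rw [← integral_eq_sub_of_hasDerivWithinAt_Icc hf' hderiv hy, ← integral_Ioc_eq_integral_Ioo]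
  calc |∫ t in a..y, f' t| ≤ ∫ t in a..y, |f' t| :=
        intervalIntegral.abs_integral_le_integral_abs hy.1
    _ = ∫ t in Ioc a y, |f' t| := intervalIntegral.integral_of_le hy.1
    _ ≤ ∫ t in Ioc a b, |f' t| :=
      setIntegral_mono_set (hf'.abs.integrableOn_Icc.mono_set Ioc_subset_Icc_self)
        (.of_forall fun _ ↦ abs_nonneg _) (Ioc_subset_Ioc_right hy.2).eventuallyLE

theorem sq_le_mul_integral_deriv_sq (hf' : ContinuousOn f' (Icc a b))
    (hderiv : ∀ t ∈ Icc a b, HasDerivWithinAt f (f' t) (Icc a b) t) (ha : f a = 0)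
    (hy : y ∈ Icc a b) :
    f y ^ 2 ≤ (b - a) * ∫ t in Ioo a b, f' t ^ 2 := by
  have hab : a ≤ b := hy.1.trans hy.2
  have : IsFiniteMeasure (volume.restrict (Ioo a b)) :=
    isFiniteMeasure_restrict.mpr measure_Ioo_lt_top.ne
  have hf'L2 : MemLp f' 2 (volume.restrict (Ioo a b)) :=
    (memLp_two_iff_integrable_sq ((hf'.mono Ioo_subset_Icc_self).aestronglyMeasurable
      measurableSet_Ioo)).mpr ((hf'.pow 2).integrableOn_Icc.mono_set Ioo_subset_Icc_self)
  have h := (abs_sub_le_integral_abs_deriv hf' hderiv hy).trans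
    (integral_le_sqrt_measureReal_mul_sqrt (.of_forall fun _ ↦ abs_nonneg _) hf'L2.abs)
  simp only [ha, sub_zero, sq_abs, measureReal_restrict_apply_univ,
    Real.volume_real_Ioo_of_le hab] at h
  calc f y ^ 2 = |f y| ^ 2 := (sq_abs _).symm
    _ ≤ (√(b - a) * √(∫ t in Ioo a b, f' t ^ 2)) ^ 2 := by gcongr
    _ = (b - a) * ∫ t in Ioo a b, f' t ^ 2 := by
      rw [mul_pow, Real.sq_sqrt (sub_nonneg.mpr hab),
        Real.sq_sqrt (setIntegral_nonneg measurableSet_Ioo fun _ _ ↦ sq_nonneg _)]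

theorem sq_le_two_mul_integral_abs_mul_abs_deriv (hf' : ContinuousOn f' (Icc a b))
    (hderiv : ∀ t ∈ Icc a b, HasDerivWithinAt f (f' t) (Icc a b) t) (ha : f a = 0)
    (hy : y ∈ Icc a b) :
    f y ^ 2 ≤ 2 * ∫ t in Ioo a b, |f t| * |f' t| := by
  have hf : ContinuousOn f (Icc a b) := fun t ht ↦ (hderiv t ht).continuousWithinAt
  have h := abs_sub_le_integral_abs_deriv (f := fun t ↦ f t ^ 2) (f' := fun t ↦ 2 * f t * f' t)
    ((continuousOn_const.mul hf).mul hf') (fun t ht ↦ by simpa using (hderiv t ht).fun_pow 2) hy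
  simpa [ha, abs_mul, integral_const_mul, mul_assoc] using h

theorem integral_sq_le_sq_mul_integral_deriv_sq (hf' : ContinuousOn f' (Icc a b))
    (hderiv : ∀ t ∈ Icc a b, HasDerivWithinAt f (f' t) (Icc a b) t) (ha : f a = 0) (hab : a ≤ b) :
    ∫ t in Ioo a b, f t ^ 2 ≤ (b - a) ^ 2 * ∫ t in Ioo a b, f' t ^ 2 := by
  have hf : ContinuousOn f (Icc a b) := fun t ht ↦ (hderiv t ht).continuousWithinAt
  calc ∫ t in Ioo a b, f t ^ 2 ≤ ∫ _ in Ioo a b, (b - a) * ∫ t in Ioo a b, f' t ^ 2 :=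
        setIntegral_mono_on ((hf.pow 2).integrableOn_Icc.mono_set Ioo_subset_Icc_self)
          (integrableOn_const measure_Ioo_lt_top.ne) measurableSet_Ioo
          fun y hy ↦ sq_le_mul_integral_deriv_sq hf' hderiv ha (Ioo_subset_Icc_self hy)
    _ = (b - a) ^ 2 * ∫ t in Ioo a b, f' t ^ 2 := by
      rw [setIntegral_const, Real.volume_real_Ioo_of_le hab, smul_eq_mul]; ring

end IntervalDeriv

theorem volume_restrict_univ_prod {α β : Type*} [MeasureSpace α] [MeasureSpace β]
    [SigmaFinite (volume : Measure α)] [SigmaFinite (volume : Measure β)] (t : Set β) :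
    (volume : Measure (α × β)).restrict (univ ×ˢ t) = volume.prod (volume.restrict t) := by
  rw [Measure.volume_eq_prod, ← Measure.prod_restrict, Measure.restrict_univ]

section Strip

variable {g gy : ℝ → ℝ → ℝ}

theorem integral_strip_sq_le_integral_strip_deriv_sq
    (hgy : ContinuousOn (fun q : ℝ × ℝ ↦ gy q.1 q.2) (univ ×ˢ Icc 0 1))
    (hderiv : ∀ x, ∀ y ∈ Icc (0 : ℝ) 1, HasDerivWithinAt (g x) (gy x y) (Icc 0 1) y)
    (h0 : ∀ x, g x 0 = 0)
    (hA : IntegrableOn (fun q : ℝ × ℝ ↦ g q.1 q.2 ^ 2) (univ ×ˢ Ioo 0 1))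
    (hB : IntegrableOn (fun q : ℝ × ℝ ↦ gy q.1 q.2 ^ 2) (univ ×ˢ Ioo 0 1)) :
    ∫ q in univ ×ˢ Ioo (0 : ℝ) 1, g q.1 q.2 ^ 2 ≤ ∫ q in univ ×ˢ Ioo (0 : ℝ) 1, gy q.1 q.2 ^ 2 := by
  rw [IntegrableOn, volume_restrict_univ_prod] at hA hB
  rw [volume_restrict_univ_prod, integral_prod _ hA, integral_prod _ hB]
  refine integral_mono hA.integral_prod_left hB.integral_prod_left fun x ↦ ?_
  simpa using integral_sq_le_sq_mul_integral_deriv_sq (hgy.uncurry_left x (mem_univ x))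
    (hderiv x) (h0 x) zero_le_one

theorem integral_slice_sq_le_two_mul_sqrt_mul_sqrt
    (hg : ContinuousOn (fun q : ℝ × ℝ ↦ g q.1 q.2) (univ ×ˢ Icc 0 1))
    (hgy : ContinuousOn (fun q : ℝ × ℝ ↦ gy q.1 q.2) (univ ×ˢ Icc 0 1))
    (hderiv : ∀ x, ∀ y ∈ Icc (0 : ℝ) 1, HasDerivWithinAt (g x) (gy x y) (Icc 0 1) y)
    (h0 : ∀ x, g x 0 = 0)
    (hA : IntegrableOn (fun q : ℝ × ℝ ↦ g q.1 q.2 ^ 2) (univ ×ˢ Ioo 0 1))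
    (hB : IntegrableOn (fun q : ℝ × ℝ ↦ gy q.1 q.2 ^ 2) (univ ×ˢ Ioo 0 1))
    {y : ℝ} (hy : y ∈ Icc (0 : ℝ) 1) :
    ∫ x, g x y ^ 2 ≤ 2 * √(∫ q in univ ×ˢ Ioo (0 : ℝ) 1, g q.1 q.2 ^ 2) *
      √(∫ q in univ ×ˢ Ioo (0 : ℝ) 1, gy q.1 q.2 ^ 2) := by
  have hS : MeasurableSet ((univ : Set ℝ) ×ˢ Ioo (0 : ℝ) 1) :=
    MeasurableSet.univ.prod measurableSet_Ioo
  have hSub : (univ : Set ℝ) ×ˢ Ioo (0 : ℝ) 1 ⊆ univ ×ˢ Icc 0 1 :=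
    prod_mono_right Ioo_subset_Icc_self
  have hgL2 : MemLp (fun q : ℝ × ℝ ↦ g q.1 q.2) 2 (volume.restrict (univ ×ˢ Ioo 0 1)) :=
    (memLp_two_iff_integrable_sq ((hg.mono hSub).aestronglyMeasurable hS)).mpr hA
  have hgyL2 : MemLp (fun q : ℝ × ℝ ↦ gy q.1 q.2) 2 (volume.restrict (univ ×ˢ Ioo 0 1)) :=
    (memLp_two_iff_integrable_sq ((hgy.mono hSub).aestronglyMeasurable hS)).mpr hB
  have hP : Integrable (fun q : ℝ × ℝ ↦ |g q.1 q.2| * |gy q.1 q.2|)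
      (volume.restrict (univ ×ˢ Ioo 0 1)) := hgL2.abs.integrable_mul hgyL2.abs
  have hCS := integral_mul_le_sqrt_mul_sqrt (.of_forall fun _ ↦ abs_nonneg _)
    (.of_forall fun _ ↦ abs_nonneg _) hgL2.abs hgyL2.abs
  simp only [sq_abs] at hCS
  rw [volume_restrict_univ_prod] at hP hCS
  calc ∫ x, g x y ^ 2 ≤ ∫ x, 2 * ∫ t in Ioo 0 1, |g x t| * |gy x t| :=
        integral_mono_of_nonneg (.of_forall fun _ ↦ sq_nonneg _)
          (hP.integral_prod_left.const_mul 2) (.of_forall fun x ↦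
            sq_le_two_mul_integral_abs_mul_abs_deriv (hgy.uncurry_left x (mem_univ x))
              (hderiv x) (h0 x) hy)
    _ = 2 * ∫ q, |g q.1 q.2| * |gy q.1 q.2|
          ∂(volume : Measure ℝ).prod (volume.restrict (Ioo 0 1)) := by
      rw [integral_const_mul, integral_prod _ hP]
    _ ≤ _ := by
      rw [mul_assoc, volume_restrict_univ_prod]
      gcongr

end Strip

theorem sqrt_two_mul_mul_sqrt_two_le (k : ℤ) :
    √(2 * (8 / 3 * (2:ℝ) ^ k)) * √2 ≤ 4 * (2:ℝ) ^ ((k : ℝ) / 2) := by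
  rw [← Real.sqrt_mul (by positivity)]
  calc √(2 * (8 / 3 * (2:ℝ) ^ k) * 2) ≤ √(4 ^ 2 * (2:ℝ) ^ k) :=
        Real.sqrt_le_sqrt (by nlinarith [zpow_pos (two_pos (α := ℝ)) k])
    _ = 4 * (2:ℝ) ^ ((k : ℝ) / 2) := by
      rw [Real.sqrt_mul' _ (by positivity), Real.sqrt_sq (by norm_num), Real.sqrt_eq_rpow,
        ← Real.rpow_intCast, ← Real.rpow_mul zero_le_two]
      ring_nf

/-- Bernstein–Agmon bound for a horizontally spectrally localized
function vanishing at `y = 0`: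
`sup |g| ≤ C 2^{k/2} ‖g‖_{L²(S)}^{1/2} ‖∂_y g‖_{L²(S)}^{1/2} ≤ C 2^{k/2} ‖∂_y g‖_{L²(S)}`. -/
theorem bernstein_agmon :
    ∃ C : ℝ, 0 < C ∧
      ∀ (k : ℤ) (g gy : ℝ → ℝ → ℝ),
        ContinuousOn (fun q : ℝ × ℝ => g q.1 q.2) ((univ : Set ℝ) ×ˢ Icc (0:ℝ) 1) →
        ContinuousOn (fun q : ℝ × ℝ => gy q.1 q.2) ((univ : Set ℝ) ×ˢ Icc (0:ℝ) 1) →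
        (∀ x : ℝ, ∀ y ∈ Icc (0:ℝ) 1,
          HasDerivWithinAt (g x) (gy x y) (Icc (0:ℝ) 1) y) →
        (∀ x : ℝ, g x 0 = 0) →
        (∀ y ∈ Icc (0:ℝ) 1, Integrable (fun x => g x y)) →
        (∀ y ∈ Icc (0:ℝ) 1, Integrable (fun x => g x y ^ 2)) →
        IntegrableOn (fun q : ℝ × ℝ => g q.1 q.2 ^ 2) ((univ : Set ℝ) ×ˢ Ioo (0:ℝ) 1) →
        IntegrableOn (fun q : ℝ × ℝ => gy q.1 q.2 ^ 2) ((univ : Set ℝ) ×ˢ Ioo (0:ℝ) 1) →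
        (∀ y ∈ Icc (0:ℝ) 1, ∀ ξ : ℝ,
          ¬ (3/4 * (2:ℝ) ^ k ≤ |ξ| ∧ |ξ| ≤ 8/3 * (2:ℝ) ^ k) →
          (∫ x : ℝ, Complex.exp ((((-2) * Real.pi * x * ξ : ℝ) : ℂ) * Complex.I) *
            (g x y : ℂ)) = 0) →
        (∀ x : ℝ, ∀ y ∈ Icc (0:ℝ) 1,
          |g x y| ≤ C * (2:ℝ) ^ ((k : ℝ) / 2) *
            Real.sqrt (Real.sqrt (∫ q in (univ : Set ℝ) ×ˢ Ioo (0:ℝ) 1, g q.1 q.2 ^ 2)) *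
            Real.sqrt (Real.sqrt (∫ q in (univ : Set ℝ) ×ˢ Ioo (0:ℝ) 1, gy q.1 q.2 ^ 2))) ∧
        C * (2:ℝ) ^ ((k : ℝ) / 2) *
            Real.sqrt (Real.sqrt (∫ q in (univ : Set ℝ) ×ˢ Ioo (0:ℝ) 1, g q.1 q.2 ^ 2)) *
            Real.sqrt (Real.sqrt (∫ q in (univ : Set ℝ) ×ˢ Ioo (0:ℝ) 1, gy q.1 q.2 ^ 2)) ≤
          C * (2:ℝ) ^ ((k : ℝ) / 2) *
            Real.sqrt (∫ q in (univ : Set ℝ) ×ˢ Ioo (0:ℝ) 1, gy q.1 q.2 ^ 2) := by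
  refine ⟨4, by norm_num, fun k g gy hg hgy hderiv h0 hL1 _ hA hB hFT ↦ ?_⟩
  set A := ∫ q in (univ : Set ℝ) ×ˢ Ioo (0:ℝ) 1, g q.1 q.2 ^ 2
  set B := ∫ q in (univ : Set ℝ) ×ˢ Ioo (0:ℝ) 1, gy q.1 q.2 ^ 2
  set R : ℝ := 8 / 3 * (2:ℝ) ^ k
  have hbern (x : ℝ) {y : ℝ} (hy : y ∈ Icc (0:ℝ) 1) :
      |g x y| ≤ √(2 * R) * √(∫ x, g x y ^ 2) :=
    abs_le_sqrt_two_mul_mul_sqrt_of_fourier_eq_zero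
      (continuousOn_univ.mp (hg.uncurry_right y hy)) (hL1 y hy) (by positivity)
      (fun ξ hξ ↦ by
        rw [Real.fourier_real_eq_integral_exp_smul]
        simpa using hFT y hy ξ fun h ↦ hξ.not_ge h.2) x
  have hconst := sqrt_two_mul_mul_sqrt_two_le k
  refine ⟨fun x y hy ↦ ?_, ?_⟩
  · calc |g x y| ≤ √(2 * R) * √(∫ x, g x y ^ 2) := hbern x hy
      _ ≤ √(2 * R) * √(2 * √A * √B) := by
        gcongr; exact integral_slice_sq_le_two_mul_sqrt_mul_sqrt hg hgy hderiv h0 hA hB hy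
      _ = √(2 * R) * √2 * √√A * √√B := by
        rw [mul_assoc 2, Real.sqrt_mul zero_le_two (√A * √B), Real.sqrt_mul (Real.sqrt_nonneg A)]
        ring
      _ ≤ 4 * (2:ℝ) ^ ((k : ℝ) / 2) * √√A * √√B := by gcongr
  · calc 4 * (2:ℝ) ^ ((k : ℝ) / 2) * √√A * √√B ≤ 4 * (2:ℝ) ^ ((k : ℝ) / 2) * √√B * √√B := by
          gcongr; exact integral_strip_sq_le_integral_strip_deriv_sq hgy hderiv h0 hA hB
      _ = 4 * (2:ℝ) ^ ((k : ℝ) / 2) * √B := by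
        rw [mul_assoc, Real.mul_self_sqrt (Real.sqrt_nonneg B)]
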